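/- arXiv:0809.2160 — 2 statements merged into one kernel-verified Lean document; each statement's English description precedes it below -/
import Mathlib

section
/- Let μ ≥ 1 and a ≥ 1 be integers and L2 a real number with L2 > a², L2 = (4μa² - 4a + 4)/(4μ - 1), and suppose (L2 - 2a)/(2(L2 - a²)) is not an integer. Then for every integer m, (L2 - a²)·m² + (2a - L2)·m + (L2·μ - 1) > 0. -/
/-! The threshold value of `L2` is exactly the one at which the discriminant of `f` vanishes, so
`4 (L2 - a²) f(x) = (2 (L2 - a²) x + 2a - L2)²`; this square is positive at every integer
because the double root of `f`, its vertex, is not an integer. -/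

theorem quadratic_pos_of_discrim_eq_zero {A B C x : ℝ} (hA : 0 < A) (hd : discrim A B C = 0)
    (hx : x ≠ -B / (2 * A)) : 0 < A * x ^ 2 + B * x + C := by
  have hsq : 4 * A * (A * x ^ 2 + B * x + C) = (2 * A * x + B) ^ 2 := by
    rw [discrim] at hd
    linear_combination -hd
  have hne : 2 * A * x + B ≠ 0 := fun h =>
    hx (by rw [eq_div_iff (by positivity)]; linarith)
  have : 0 < 4 * A * (A * x ^ 2 + B * x + C) := by rw [hsq]; positivity
  exact pos_of_mul_pos_right this (by positivity)

theorem discrim_eq_zero_of_mul_eq {μ a L : ℝ} (hL : L * (4 * μ - 1) = 4 * μ * a ^ 2 - 4 * a + 4) :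
    discrim (L - a ^ 2) (2 * a - L) (L * μ - 1) = 0 := by
  rw [discrim]
  linear_combination -L * hL

theorem stmt_5_general (μ a : ℤ) (L2 : ℝ) (hL2 : L2 > (a : ℝ) ^ 2)
    (hL2' : L2 = (4 * (μ : ℝ) * (a : ℝ) ^ 2 - 4 * a + 4) / (4 * μ - 1))
    (hvertex : ¬ ∃ k : ℤ, (L2 - 2 * a) / (2 * (L2 - (a : ℝ) ^ 2)) = (k : ℝ)) :
    ∀ m : ℤ, (L2 - (a : ℝ) ^ 2) * (m : ℝ) ^ 2 + (2 * a - L2) * m + (L2 * μ - 1) > 0 := by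
  intro m
  have hden : (4 * μ - 1 : ℝ) ≠ 0 := by exact_mod_cast (by omega : 4 * μ - 1 ≠ 0)
  have hL2eq : L2 * (4 * μ - 1) = 4 * μ * (a : ℝ) ^ 2 - 4 * a + 4 := by
    rw [hL2', div_mul_cancel₀ _ hden]
  refine quadratic_pos_of_discrim_eq_zero (by linarith) (discrim_eq_zero_of_mul_eq hL2eq) ?_
  intro hm
  exact hvertex ⟨m, by rw [hm]; ring⟩

theorem stmt_5 (μ a : ℤ) (hμ : μ ≥ 1) (ha : a ≥ 1) (L2 : ℝ) (hL2 : L2 > (a : ℝ) ^ 2)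
    (hL2' : L2 = (4 * (μ : ℝ) * (a : ℝ) ^ 2 - 4 * a + 4) / (4 * μ - 1))
    (hvertex : ¬ ∃ k : ℤ, (L2 - 2 * a) / (2 * (L2 - (a : ℝ) ^ 2)) = (k : ℝ)) :
    ∀ m : ℤ, (L2 - (a : ℝ) ^ 2) * (m : ℝ) ^ 2 + (2 * a - L2) * m + (L2 * μ - 1) > 0 :=
  stmt_5_general μ a L2 hL2 hL2' hvertex
end

section
/- Let m ≥ 2 and μ ≥ 2 be integers, ε ≥ 0 and L2 > 0 real numbers with ε < √(1 - 1/(4μ))·√L2. If an integer CL satisfies CL = m·ε (the Seshadri curve relation C·L = m·ε(L;1)) and (m(m-1) + μ)·L2 ≤ (CL)², then we reach a contradiction; i.e., there is no real m ≥ 2 with (m(m-1) + μ)·L2 ≤ m²·ε². -/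
theorem sq_mul_one_sub_one_div_four_mul_le {c : ℝ} (hc : 0 < c) (m : ℝ) :
    m ^ 2 * (1 - 1 / (4 * c)) ≤ m * (m - 1) + c := by
  have hgap : m * (m - 1) + c - m ^ 2 * (1 - 1 / (4 * c)) = (m - 2 * c) ^ 2 / (4 * c) := by
    field_simp
    ring
  have : 0 ≤ (m - 2 * c) ^ 2 / (4 * c) := by positivity
  linarith

theorem sq_lt_mul_of_lt_sqrt_mul_sqrt {x a b : ℝ} (hx : 0 ≤ x) (ha : 0 ≤ a)
    (h : x < Real.sqrt a * Real.sqrt b) : x ^ 2 < a * b := by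
  rwa [← Real.sqrt_mul ha, Real.lt_sqrt hx] at h

theorem one_sub_one_div_four_mul_nonneg {c : ℝ} (hc : 1 / 4 ≤ c) : 0 ≤ 1 - 1 / (4 * c) := by
  rw [sub_nonneg, div_le_one (by linarith)]
  linarith

theorem stmt_17 (μ : ℤ) (hμ : μ ≥ 2) (ε L2 : ℝ) (hε : ε ≥ 0) (hL2 : L2 > 0)
    (hbound : ε < Real.sqrt (1 - 1 / (4 * (μ : ℝ))) * Real.sqrt L2) :
    ∀ m : ℝ, m ≥ 2 → ¬ ((m * (m - 1) + (μ : ℝ)) * L2 ≤ m ^ 2 * ε ^ 2) := by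
  intro m hm
  have hμ2 : (2 : ℝ) ≤ μ := by exact_mod_cast hμ
  have hε2 : ε ^ 2 < (1 - 1 / (4 * (μ : ℝ))) * L2 :=
    sq_lt_mul_of_lt_sqrt_mul_sqrt hε (one_sub_one_div_four_mul_nonneg (by linarith)) hbound
  rw [not_le]
  calc m ^ 2 * ε ^ 2 < m ^ 2 * ((1 - 1 / (4 * (μ : ℝ))) * L2) :=
        mul_lt_mul_of_pos_left hε2 (by positivity)
    _ = m ^ 2 * (1 - 1 / (4 * (μ : ℝ))) * L2 := by ring
    _ ≤ (m * (m - 1) + μ) * L2 :=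
        mul_le_mul_of_nonneg_right (sq_mul_one_sub_one_div_four_mul_le (by linarith) m) hL2.le
end
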